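/- For every α ∈ (0,1] and η ∈ (0,α) there is a constant C < ∞, depending only on α and η, with the following property. Let (X,μ) be a probability space, let s : X → S and t : X → T be measurable maps into finite sets, and set I := I_μ(s;t). Then for every measurable U ⊆ X with μ(U) ≥ α there is a finite subset S₀ ⊆ U such that log |S₀| ≤ C·(I + 1) and μ( U ∩ { x : ∃ w ∈ U, t(x) = t(w) and ∃ z ∈ S₀, s(w) = s(z) } ) > μ(U) − η. -/

import Mathlib

open MeasureTheory

/-- Shannon entropy of a finite-valued map, with natural logarithm. -/
noncomputable def finEntropy {X S : Type*} [MeasurableSpace X] [Fintype S]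
    (μ : Measure X) (s : X → S) : ℝ :=
  ∑ i : S, Real.negMulLog ((μ (s ⁻¹' {i})).toReal)

/-- Mutual information `I_μ(s;t)` of finite-valued maps. -/
noncomputable def finMutualInfo {X S T : Type*} [MeasurableSpace X]
    [Fintype S] [Fintype T] (μ : Measure X) (s : X → S) (t : X → T) : ℝ :=
  finEntropy μ s + finEntropy μ t - finEntropy μ (fun x => (s x, t x))

/-!
Write `q(a,b) = μ(U ∩ {s = a, t = b}) ≤ p(a,b) = μ{s = a, t = b}`, and for a value `b` of `t` let
`r(b)` be the total `q`-mass of the `s`-fibres meeting `U ∩ {t = b}` in positive measure. Comparing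
each term with `log x ≤ x - 1`, the average of `-log r` under `q` is at most the mutual information
of `q`, which exceeds `I = I(p)` by at most `2 log 2`. By Markov's inequality the `t`-fibres with
`r(b) < δ := exp(-2(I+2)/η)` carry mass less than `η/2`. Every other `t`-fibre is met by `s`-fibres
of total mass at least `δ`, so the `s`-fibre meeting the most uncovered mass removes a `δ`-fraction
of it; after `k ≈ 2/(ηδ)` greedy steps less than `η/2` is left, and `log k ≤ 6(I+1)/η`. One point
of `U` in each chosen `s`-fibre gives `S₀`.
-/

section

open Real Finset

namespace Real

lemma negMulLog_add_mul_log_le {x y : ℝ} (hx : 0 < x) (hy : 0 < y) :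
    negMulLog x + x * log y ≤ y - x := by
  have h := mul_le_mul_of_nonneg_left (log_le_sub_one_of_pos (div_pos hy hx)) hx.le
  rw [log_div hy.ne' hx.ne', mul_sub_one, mul_div_cancel₀ _ hx.ne'] at h
  simp only [negMulLog]
  linarith

lemma negMulLog_add_negMulLog_le {x y : ℝ} (hx : 0 ≤ x) (hy : 0 ≤ y) :
    negMulLog x + negMulLog y ≤ negMulLog (x + y) + (x + y) * log 2 := by
  have h := concaveOn_negMulLog.2 (Set.mem_Ici.2 hx) (Set.mem_Ici.2 hy)
    (by norm_num : (0 : ℝ) ≤ 2⁻¹) (by norm_num : (0 : ℝ) ≤ 2⁻¹) (by norm_num)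
  simp only [smul_eq_mul] at h
  rw [← mul_add _ x y, negMulLog_mul] at h
  simp only [negMulLog, log_inv] at h ⊢
  linarith

lemma negMulLog_add_le {x y : ℝ} (hx : 0 ≤ x) (hy : 0 ≤ y) :
    negMulLog (x + y) ≤ negMulLog x + negMulLog y := by
  have mono : ∀ {u v : ℝ}, 0 ≤ u → 0 ≤ v → u * log u ≤ u * log (u + v) := fun {u v} hu hv => by
    rcases hu.eq_or_lt with rfl | hu
    · simp
    · exact mul_le_mul_of_nonneg_left (log_le_log hu (by linarith)) hu.le
  have h1 := mono hx hy
  have h2 := mono hy hx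
  rw [add_comm y] at h2
  simp only [negMulLog]
  linarith

lemma sum_negMulLog_add_sum_negMulLog_le {ι : Type*} {s : Finset ι} {f g : ι → ℝ}
    (hf : ∀ i ∈ s, 0 ≤ f i) (hg : ∀ i ∈ s, 0 ≤ g i) :
    ∑ i ∈ s, negMulLog (f i) + ∑ i ∈ s, negMulLog (g i)
      ≤ ∑ i ∈ s, negMulLog (f i + g i) + (∑ i ∈ s, (f i + g i)) * log 2 := by
  rw [← sum_add_distrib, sum_mul, ← sum_add_distrib]
  exact sum_le_sum fun i hi => negMulLog_add_negMulLog_le (hf i hi) (hg i hi)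

lemma log_natCast_le_log_natCast {m n : ℕ} (h : m ≤ n) : log m ≤ log n := by
  rcases m.eq_zero_or_pos with rfl | hm
  · simpa using log_natCast_nonneg n
  · exact log_le_log (by exact_mod_cast hm) (by exact_mod_cast h)

end Real

section MassMatrix

variable {S T : Type*}

noncomputable def rowMass [Fintype T] (q : S → T → ℝ) (a : S) : ℝ := ∑ b, q a b

noncomputable def colMass [Fintype S] (q : S → T → ℝ) (b : T) : ℝ := ∑ a, q a b

lemma le_rowMass [Fintype T] {q : S → T → ℝ} (h0 : ∀ a b, 0 ≤ q a b) (a : S) (b : T) :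
    q a b ≤ rowMass q a :=
  single_le_sum (fun b _ => h0 a b) (mem_univ b)

lemma rowMass_nonneg [Fintype T] {q : S → T → ℝ} (h0 : ∀ a b, 0 ≤ q a b) (a : S) :
    0 ≤ rowMass q a :=
  sum_nonneg fun b _ => h0 a b

lemma colMass_nonneg [Fintype S] {q : S → T → ℝ} (h0 : ∀ a b, 0 ≤ q a b) (b : T) :
    0 ≤ colMass q b :=
  sum_nonneg fun a _ => h0 a b

lemma le_colMass [Fintype S] {q : S → T → ℝ} (h0 : ∀ a b, 0 ≤ q a b) (a : S) (b : T) :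
    q a b ≤ colMass q b :=
  single_le_sum (fun a _ => h0 a b) (mem_univ a)

variable [Fintype S] [Fintype T]

noncomputable def matrixMutualInfo (q : S → T → ℝ) : ℝ :=
  ∑ a, negMulLog (rowMass q a) + ∑ b, negMulLog (colMass q b) - ∑ a, ∑ b, negMulLog (q a b)

noncomputable def reachMass (q : S → T → ℝ) (b : T) : ℝ := ∑ a with 0 < q a b, rowMass q a

variable {q : S → T → ℝ}

lemma sum_colMass (q : S → T → ℝ) : ∑ b, colMass q b = ∑ a, ∑ b, q a b := sum_comm

lemma colMass_le_reachMass (h0 : ∀ a b, 0 ≤ q a b) (b : T) : colMass q b ≤ reachMass q b := by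
  rw [colMass, reachMass, ← sum_filter_of_ne (p := fun a => 0 < q a b)
    (fun a _ h => (h0 a b).lt_of_ne' h)]
  exact sum_le_sum fun a _ => le_rowMass h0 a b

lemma reachMass_le_sum (h0 : ∀ a b, 0 ≤ q a b) (b : T) : reachMass q b ≤ ∑ a, ∑ b, q a b :=
  sum_le_sum_of_subset_of_nonneg (filter_subset _ _)
    fun a _ _ => sum_nonneg fun b _ => h0 a b

lemma matrixMutualInfo_eq_neg_sum (q : S → T → ℝ) : matrixMutualInfo q =
    -∑ a, ∑ b, (negMulLog (q a b) + q a b * log (rowMass q a) + q a b * log (colMass q b)) := by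
  have hcol : ∑ b, negMulLog (colMass q b) = -∑ a, ∑ b, q a b * log (colMass q b) := by
    rw [sum_comm]
    simp only [negMulLog, colMass, neg_mul, sum_neg_distrib, sum_mul]
  simp only [matrixMutualInfo, hcol, sum_add_distrib]
  simp only [negMulLog, rowMass, neg_mul, sum_neg_distrib, sum_mul]
  ring

lemma matrixMutualInfo_nonneg (h0 : ∀ a b, 0 ≤ q a b) (h1 : ∑ a, ∑ b, q a b ≤ 1) :
    0 ≤ matrixMutualInfo q := by
  have key : ∀ a b, negMulLog (q a b) + q a b * log (rowMass q a) + q a b * log (colMass q b)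
      ≤ rowMass q a * colMass q b - q a b := by
    intro a b
    rcases (h0 a b).eq_or_lt with h | h
    · rw [← h, negMulLog_zero, zero_mul, zero_mul, add_zero, add_zero, sub_zero]
      exact mul_nonneg (rowMass_nonneg h0 a) (colMass_nonneg h0 b)
    · have hr := h.trans_le (le_rowMass h0 a b)
      have hc := h.trans_le (le_colMass h0 a b)
      rw [add_assoc, ← mul_add, ← log_mul hr.ne' hc.ne']
      exact negMulLog_add_mul_log_le h (mul_pos hr hc)
  have h0' : 0 ≤ ∑ a, ∑ b, q a b := sum_nonneg fun a _ => sum_nonneg fun b _ => h0 a b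
  rw [matrixMutualInfo_eq_neg_sum, neg_nonneg]
  calc _ ≤ ∑ a, ∑ b, (rowMass q a * colMass q b - q a b) :=
        sum_le_sum fun a _ => sum_le_sum fun b _ => key a b
    _ = (∑ a, rowMass q a) * (∑ b, colMass q b) - ∑ a, ∑ b, q a b := by
      rw [sum_mul_sum, ← sum_sub_distrib]
      exact sum_congr rfl fun a _ => sum_sub_distrib _ _
    _ = (∑ a, ∑ b, q a b) * (∑ a, ∑ b, q a b) - ∑ a, ∑ b, q a b := by rw [sum_colMass]; rfl
    _ ≤ 0 := by nlinarith

lemma sum_colMass_mul_neg_log_reachMass_le (h0 : ∀ a b, 0 ≤ q a b) :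
    ∑ b, colMass q b * -log (reachMass q b) ≤ matrixMutualInfo q := by
  have key : ∀ a b, negMulLog (q a b) + q a b * log (rowMass q a) + q a b * log (colMass q b)
      - q a b * log (reachMass q b)
      ≤ (if 0 < q a b then rowMass q a * colMass q b / reachMass q b else 0) - q a b := by
    intro a b
    rcases (h0 a b).eq_or_lt with h | h
    · simp [← h]
    · have hr := h.trans_le (le_rowMass h0 a b)
      have hc := h.trans_le (le_colMass h0 a b)
      have hR := hc.trans_le (colMass_le_reachMass h0 b)
      rw [if_pos h, add_sub_assoc, add_assoc, ← mul_sub, ← mul_add,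
        ← log_div hc.ne' hR.ne', ← log_mul hr.ne' (div_pos hc hR).ne', ← mul_div_assoc]
      exact negMulLog_add_mul_log_le h (by positivity)
  have hsum : ∑ a, ∑ b, (if 0 < q a b then rowMass q a * colMass q b / reachMass q b else 0)
      = ∑ b, colMass q b := by
    rw [sum_comm]
    refine sum_congr rfl fun b _ => ?_
    rw [← sum_filter, ← sum_div, ← sum_mul]
    refine mul_div_cancel_left_of_imp fun h => ?_
    exact le_antisymm (h ▸ colMass_le_reachMass h0 b) (sum_nonneg fun a _ => h0 a b)
  have hL : ∑ b, colMass q b * -log (reachMass q b) = -∑ a, ∑ b, q a b * log (reachMass q b) := by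
    simp only [colMass, sum_mul, mul_neg, sum_neg_distrib]
    rw [sum_comm]
  calc ∑ b, colMass q b * -log (reachMass q b)
      = matrixMutualInfo q + ∑ a, ∑ b, (negMulLog (q a b) + q a b * log (rowMass q a)
          + q a b * log (colMass q b) - q a b * log (reachMass q b)) := by
        rw [hL, matrixMutualInfo_eq_neg_sum]
        simp only [sum_sub_distrib]
        ring
    _ ≤ matrixMutualInfo q + ∑ a, ∑ b,
        ((if 0 < q a b then rowMass q a * colMass q b / reachMass q b else 0) - q a b) :=
      add_le_add le_rfl (sum_le_sum fun a _ => sum_le_sum fun b _ => key a b)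
    _ = matrixMutualInfo q := by
      simp only [sum_sub_distrib, hsum, sum_colMass, sub_self, add_zero]

lemma matrixMutualInfo_le_add_two_log_two {p : S → T → ℝ} (hq0 : ∀ a b, 0 ≤ q a b)
    (hqp : ∀ a b, q a b ≤ p a b) (hp : ∑ a, ∑ b, p a b = 1) :
    matrixMutualInfo q ≤ matrixMutualInfo p + 2 * log 2 := by
  set r := p - q
  have hr0 : ∀ a b, 0 ≤ r a b := fun a b => sub_nonneg.2 (hqp a b)
  have hqr : ∀ a b, q a b + r a b = p a b := fun a b => add_sub_cancel _ _
  have hrow : ∀ a, rowMass q a + rowMass r a = rowMass p a := fun a => by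
    simp only [rowMass, ← sum_add_distrib, hqr]
  have hcol : ∀ b, colMass q b + colMass r b = colMass p b := fun b => by
    simp only [colMass, ← sum_add_distrib, hqr]
  have hI : 0 ≤ matrixMutualInfo r := by
    refine matrixMutualInfo_nonneg hr0 (hp ▸ sum_le_sum fun a _ => sum_le_sum fun b _ => ?_)
    exact sub_le_self _ (hq0 a b)
  have hrows := sum_negMulLog_add_sum_negMulLog_le (s := univ)
    (fun a _ => rowMass_nonneg hq0 a) (fun a _ => rowMass_nonneg hr0 a)
  have hcols := sum_negMulLog_add_sum_negMulLog_le (s := univ)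
    (fun b _ => colMass_nonneg hq0 b) (fun b _ => colMass_nonneg hr0 b)
  simp only [hrow, hcol, sum_colMass] at hrows hcols
  have hjoint : ∑ a, ∑ b, negMulLog (p a b)
      ≤ ∑ a, ∑ b, negMulLog (q a b) + ∑ a, ∑ b, negMulLog (r a b) := by
    rw [← sum_add_distrib]
    refine sum_le_sum fun a _ => ?_
    rw [← sum_add_distrib]
    exact sum_le_sum fun b _ => hqr a b ▸ negMulLog_add_le (hq0 a b) (hr0 a b)
  have hrowp : ∑ a, rowMass p a = 1 := hp
  rw [hrowp] at hrows
  rw [hp] at hcols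
  unfold matrixMutualInfo at hI ⊢
  linarith

lemma sum_colMass_filter_reachMass_lt_mul_le (h0 : ∀ a b, 0 ≤ q a b)
    (h1 : ∑ a, ∑ b, q a b ≤ 1) (δ : ℝ) :
    (∑ b with reachMass q b < δ, colMass q b) * -log δ ≤ matrixMutualInfo q := by
  have hreach : ∀ b, 0 ≤ reachMass q b := fun b => sum_nonneg fun a _ => rowMass_nonneg h0 a
  calc (∑ b with reachMass q b < δ, colMass q b) * -log δ
      = ∑ b with reachMass q b < δ, colMass q b * -log δ := sum_mul _ _ _
    _ ≤ ∑ b with reachMass q b < δ, colMass q b * -log (reachMass q b) := by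
      refine sum_le_sum fun b hb => ?_
      rcases (colMass_nonneg h0 b).eq_or_lt with h | h
      · simp [← h]
      · have hR := h.trans_le (colMass_le_reachMass h0 b)
        exact mul_le_mul_of_nonneg_left (neg_le_neg (log_le_log hR (mem_filter.1 hb).2.le)) h.le
    _ ≤ ∑ b, colMass q b * -log (reachMass q b) :=
      sum_le_sum_of_subset_of_nonneg (filter_subset _ _) fun b _ _ =>
        mul_nonneg (colMass_nonneg h0 b)
          (neg_nonneg.2 (log_nonpos (hreach b) ((reachMass_le_sum h0 b).trans h1)))
    _ ≤ matrixMutualInfo q := sum_colMass_mul_neg_log_reachMass_le h0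

lemma sum_colMass_filter_reachMass_lt_exp_lt {p : S → T → ℝ} (hq0 : ∀ a b, 0 ≤ q a b)
    (hqp : ∀ a b, q a b ≤ p a b) (hp : ∑ a, ∑ b, p a b = 1) {η : ℝ} (hη : 0 < η) :
    ∑ b with reachMass q b < exp (-(2 * (matrixMutualInfo p + 2) / η)), colMass q b < η / 2 := by
  have hq1 : ∑ a, ∑ b, q a b ≤ 1 := hp ▸ sum_le_sum fun a _ => sum_le_sum fun b _ => hqp a b
  have hIp : 0 ≤ matrixMutualInfo p :=
    matrixMutualInfo_nonneg (fun a b => (hq0 a b).trans (hqp a b)) hp.le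
  set M := matrixMutualInfo p + 2
  have hM : 0 < M := by positivity
  have hmarkov := sum_colMass_filter_reachMass_lt_mul_le hq0 hq1 (exp (-(2 * M / η)))
  rw [log_exp, neg_neg] at hmarkov
  have hI := matrixMutualInfo_le_add_two_log_two hq0 hqp hp
  have hlog2 : log 2 < 1 := log_two_lt_d9.trans (by norm_num)
  calc ∑ b with reachMass q b < exp (-(2 * M / η)), colMass q b
      = (∑ b with reachMass q b < exp (-(2 * M / η)), colMass q b) * (2 * M / η)
          * (η / (2 * M)) := by field_simp
    _ < M * (η / (2 * M)) := by gcongr; linarith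
    _ = η / 2 := by field_simp

end MassMatrix

section GreedyCover

variable {S T : Type*} [Fintype S] {r : S → ℝ} {R : S → T → Prop} [DecidableRel R] {w : T → ℝ}
  {G : Finset T} {δ : ℝ}

lemma exists_sum_uncovered_insert_le [Nonempty S] [DecidableEq S] (hr : ∀ a, 0 ≤ r a)
    (hr1 : ∑ a, r a ≤ 1) (hw : ∀ b, 0 ≤ w b) (hδ : ∀ b ∈ G, δ ≤ ∑ a with R a b, r a)
    (V : Finset S) :
    ∃ a, ∑ b ∈ G with ¬∃ a' ∈ insert a V, R a' b, w b
      ≤ (1 - δ) * ∑ b ∈ G with ¬∃ a' ∈ V, R a' b, w b := by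
  set G' := G.filter fun b => ¬∃ a' ∈ V, R a' b
  set gain : S → ℝ := fun a => ∑ b ∈ G' with R a b, w b
  have h_insert : ∀ a, ∑ b ∈ G with ¬∃ a' ∈ insert a V, R a' b, w b = ∑ b ∈ G', w b - gain a := by
    intro a
    have h : G.filter (fun b => ¬∃ a' ∈ insert a V, R a' b) = G'.filter (fun b => ¬R a b) := by
      rw [filter_filter]
      exact filter_congr fun b _ => by rw [exists_mem_insert, not_or, and_comm]
    rw [h, eq_sub_iff_add_eq']
    exact sum_filter_add_sum_filter_not _ _ _
  have h_avg : δ * ∑ b ∈ G', w b ≤ ∑ a, r a * gain a :=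
    calc δ * ∑ b ∈ G', w b = ∑ b ∈ G', w b * δ := by rw [mul_sum]; simp only [mul_comm]
      _ ≤ ∑ b ∈ G', w b * ∑ a with R a b, r a :=
        sum_le_sum fun b hb => mul_le_mul_of_nonneg_left (hδ b (mem_filter.1 hb).1) (hw b)
      _ = ∑ a, r a * gain a := by
        simp only [gain, mul_sum, sum_filter]
        rw [sum_comm]
        simp only [mul_ite, mul_zero, mul_comm]
  obtain ⟨a₀, ha₀⟩ := Finite.exists_max gain
  refine ⟨a₀, ?_⟩
  have h_gain : δ * ∑ b ∈ G', w b ≤ gain a₀ :=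
    calc δ * ∑ b ∈ G', w b ≤ ∑ a, r a * gain a := h_avg
      _ ≤ ∑ a, r a * gain a₀ := sum_le_sum fun a _ => mul_le_mul_of_nonneg_left (ha₀ a) (hr a)
      _ = (∑ a, r a) * gain a₀ := (sum_mul _ _ _).symm
      _ ≤ gain a₀ := mul_le_of_le_one_left (sum_nonneg fun b _ => hw b) hr1
  rw [h_insert]
  linarith

lemma exists_card_le_sum_uncovered_le_one_sub_pow [Nonempty S] (hr : ∀ a, 0 ≤ r a)
    (hr1 : ∑ a, r a ≤ 1) (hw : ∀ b, 0 ≤ w b) (hδ : ∀ b ∈ G, δ ≤ ∑ a with R a b, r a)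
    (hδ1 : δ ≤ 1) (k : ℕ) :
    ∃ V : Finset S, V.card ≤ k ∧
      ∑ b ∈ G with ¬∃ a ∈ V, R a b, w b ≤ (1 - δ) ^ k * ∑ b ∈ G, w b := by
  classical
  induction k with
  | zero => exact ⟨∅, by simp, by simp⟩
  | succ k ih =>
    obtain ⟨V, hVk, hV⟩ := ih
    obtain ⟨a, ha⟩ := exists_sum_uncovered_insert_le hr hr1 hw hδ V
    refine ⟨insert a V, (card_insert_le a V).trans (by omega), ha.trans ?_⟩
    rw [pow_succ', mul_assoc]
    exact mul_le_mul_of_nonneg_left hV (sub_nonneg.2 hδ1)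

end GreedyCover

lemma exists_log_le_and_one_sub_pow_le {δ ε : ℝ} (hδ0 : 0 < δ) (hδ1 : δ ≤ 1) (hε : 0 < ε) :
    ∃ k : ℕ, log k ≤ 1 / ε - log δ ∧ (1 - δ) ^ k ≤ ε := by
  set k := ⌈1 / (ε * δ)⌉₊
  have hk : 1 / ε ≤ k * δ := by
    rw [← div_le_iff₀ hδ0, div_div]
    exact Nat.le_ceil _
  have hk' : (k : ℝ) < 1 / (ε * δ) + 1 := Nat.ceil_lt_add_one (by positivity)
  refine ⟨k, ?_, ?_⟩
  · have hkpos : 0 < (k : ℝ) := by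
      have : 0 < (k : ℝ) * δ := (by positivity : (0 : ℝ) < 1 / ε).trans_le hk
      exact pos_of_mul_pos_left this hδ0.le
    have hk_le : (k : ℝ) ≤ (1 / ε + 1) / δ := by
      have : 1 ≤ 1 / δ := by rw [le_div_iff₀ hδ0]; linarith
      rw [add_div, div_div]
      linarith
    calc log k ≤ log ((1 / ε + 1) / δ) := log_le_log hkpos hk_le
      _ = log (1 / ε + 1) - log δ := log_div (by positivity) hδ0.ne'
      _ ≤ 1 / ε - log δ := by linarith [log_le_sub_one_of_pos (by positivity : 0 < 1 / ε + 1)]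
  · have hexp : 1 / ε ≤ exp (k * δ) := by linarith [add_one_le_exp (k * δ)]
    calc (1 - δ) ^ k ≤ exp (-δ) ^ k := pow_le_pow_left₀ (sub_nonneg.2 hδ1) (one_sub_le_exp_neg δ) k
      _ = (exp (k * δ))⁻¹ := by rw [← exp_nat_mul, ← exp_neg, mul_neg]
      _ ≤ (1 / ε)⁻¹ := inv_anti₀ (by positivity) hexp
      _ = ε := by rw [one_div, inv_inv]

theorem exists_card_le_sum_colMass_covered {S T : Type*} [Fintype S] [Nonempty S] [Fintype T]
    {q p : S → T → ℝ} (hq0 : ∀ a b, 0 ≤ q a b) (hqp : ∀ a b, q a b ≤ p a b)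
    (hp : ∑ a, ∑ b, p a b = 1) {η : ℝ} (hη : 0 < η) :
    ∃ V : Finset S, log V.card ≤ 6 / η * (matrixMutualInfo p + 1) ∧
      ∑ a, ∑ b, q a b - η < ∑ b with ∃ a ∈ V, 0 < q a b, colMass q b := by
  have hq1 : ∑ a, ∑ b, q a b ≤ 1 := hp ▸ sum_le_sum fun a _ => sum_le_sum fun b _ => hqp a b
  have hIp : 0 ≤ matrixMutualInfo p :=
    matrixMutualInfo_nonneg (fun a b => (hq0 a b).trans (hqp a b)) hp.le
  set δ := exp (-(2 * (matrixMutualInfo p + 2) / η))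
  have hδ1 : δ ≤ 1 := exp_le_one_iff.2 (neg_nonpos.2 (by positivity))
  have h_bad := sum_colMass_filter_reachMass_lt_exp_lt hq0 hqp hp hη
  obtain ⟨k, hk_log, hk_pow⟩ := exists_log_le_and_one_sub_pow_le (exp_pos _) hδ1 (half_pos hη)
  set G := univ.filter fun b => δ ≤ reachMass q b
  obtain ⟨V, hVk, hV⟩ := exists_card_le_sum_uncovered_le_one_sub_pow (R := fun a b => 0 < q a b)
    (G := G) (rowMass_nonneg hq0) hq1 (colMass_nonneg hq0) (fun b hb => (mem_filter.1 hb).2) hδ1 k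
  refine ⟨V, ?_, ?_⟩
  · calc log V.card ≤ log k := log_natCast_le_log_natCast hVk
      _ ≤ 1 / (η / 2) - log δ := hk_log
      _ = (2 * matrixMutualInfo p + 6) / η := by rw [log_exp]; field_simp; ring
      _ ≤ 6 / η * (matrixMutualInfo p + 1) := by
        rw [div_mul_eq_mul_div]; gcongr; linarith
  · have h_good : ∑ b ∈ G with ¬∃ a ∈ V, 0 < q a b, colMass q b ≤ η / 2 := by
      refine hV.trans ((mul_le_of_le_one_right (pow_nonneg (sub_nonneg.2 hδ1) k) ?_).trans hk_pow)
      rw [← sum_colMass] at hq1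
      exact (sum_le_sum_of_subset_of_nonneg (filter_subset _ _)
        fun b _ _ => colMass_nonneg hq0 b).trans hq1
    have h_split : ∑ b with ¬∃ a ∈ V, 0 < q a b, colMass q b
        ≤ ∑ b with reachMass q b < δ, colMass q b
          + ∑ b ∈ G with ¬∃ a ∈ V, 0 < q a b, colMass q b := by
      simp only [G, filter_filter, sum_filter, ← sum_add_distrib]
      refine sum_le_sum fun b _ => ?_
      have := colMass_nonneg hq0 b
      split_ifs <;> grind
    have h_total := sum_filter_add_sum_filter_not univ (fun b => ∃ a ∈ V, 0 < q a b) (colMass q)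
    rw [sum_colMass] at h_total
    linarith

lemma Finset.exists_subset_card_le_forall_exists_eq {X S : Type*} (U : Set X) (s : X → S)
    (V : Finset S) :
    ∃ S₀ : Finset X, ↑S₀ ⊆ U ∧ S₀.card ≤ V.card ∧ ∀ w ∈ U, s w ∈ V → ∃ z ∈ S₀, s z = s w := by
  classical
  obtain ⟨S₀, hS₀U, hinj, himage⟩ := exists_subset_injOn_image_eq_of_surjOn U
    (V.filter fun a => a ∈ s '' U) fun a ha => (mem_filter.1 ha).2
  refine ⟨S₀, hS₀U, ?_, fun w hw hsw => ?_⟩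
  · rw [← card_image_of_injOn hinj, himage]
    exact card_filter_le _ _
  · have : s w ∈ S₀.image s := himage ▸ mem_filter.2 ⟨hsw, w, hw, rfl⟩
    simpa using this

section JointMass

variable {X S T : Type*} [MeasurableSpace X] {s : X → S} {t : X → T}

noncomputable def jointMass (μ : Measure X) (s : X → S) (t : X → T) (a : S) (b : T) : ℝ :=
  μ.real (s ⁻¹' {a} ∩ t ⁻¹' {b})

lemma jointMass_restrict_le (μ : Measure X) [IsFiniteMeasure μ] (U : Set X) (a : S) (b : T) :
    jointMass (μ.restrict U) s t a b ≤ jointMass μ s t a b :=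
  ENNReal.toReal_mono (measure_ne_top _ _) (Measure.restrict_apply_le _ _)

lemma exists_mem_of_jointMass_restrict_pos (μ : Measure X) {U : Set X} (hU : MeasurableSet U)
    {a : S} {b : T} (h : 0 < jointMass (μ.restrict U) s t a b) :
    ∃ w ∈ U, s w = a ∧ t w = b := by
  have hne : μ.restrict U (s ⁻¹' {a} ∩ t ⁻¹' {b}) ≠ 0 := fun h0 => by
    simp [jointMass, measureReal_def, h0] at h
  rw [Measure.restrict_apply' hU] at hne
  obtain ⟨w, ⟨hws, hwt⟩, hwU⟩ := nonempty_of_measure_ne_zero hne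
  exact ⟨w, hwU, hws, hwt⟩

variable (μ : Measure X) [IsFiniteMeasure μ]

lemma sum_measureReal_preimage_singleton_inter [MeasurableSpace T] [MeasurableSingletonClass T]
    (ht : Measurable t) (A : Set X) (B : Finset T) :
    ∑ b ∈ B, μ.real (t ⁻¹' {b} ∩ A) = μ.real (t ⁻¹' B ∩ A) := by
  simp only [← measureReal_restrict_apply (ht (measurableSet_singleton _)),
    ← measureReal_restrict_apply (ht B.measurableSet)]
  exact sum_measureReal_preimage_singleton B fun b _ => ht (measurableSet_singleton b)

lemma rowMass_jointMass [Fintype T] [MeasurableSpace T] [MeasurableSingletonClass T]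
    (ht : Measurable t) (a : S) : rowMass (jointMass μ s t) a = μ.real (s ⁻¹' {a}) := by
  simp only [rowMass, jointMass, Set.inter_comm (s ⁻¹' _)]
  simpa using sum_measureReal_preimage_singleton_inter μ ht (s ⁻¹' {a}) univ

lemma colMass_jointMass [Fintype S] [MeasurableSpace S] [MeasurableSingletonClass S]
    (hs : Measurable s) (b : T) : colMass (jointMass μ s t) b = μ.real (t ⁻¹' {b}) := by
  simp only [colMass, jointMass]
  simpa using sum_measureReal_preimage_singleton_inter μ hs (t ⁻¹' {b}) univ

lemma sum_colMass_jointMass [Fintype S] [MeasurableSpace S] [MeasurableSingletonClass S]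
    [MeasurableSpace T] [MeasurableSingletonClass T] (hs : Measurable s) (ht : Measurable t)
    (B : Finset T) : ∑ b ∈ B, colMass (jointMass μ s t) b = μ.real (t ⁻¹' B) := by
  simp only [colMass_jointMass μ hs]
  exact sum_measureReal_preimage_singleton B fun b _ => ht (measurableSet_singleton b)

lemma sum_jointMass [Fintype S] [MeasurableSpace S] [MeasurableSingletonClass S] [Fintype T]
    [MeasurableSpace T] [MeasurableSingletonClass T] (hs : Measurable s) (ht : Measurable t) :
    ∑ a, ∑ b, jointMass μ s t a b = μ.real Set.univ := by
  rw [← sum_colMass, sum_colMass_jointMass μ hs ht, coe_univ, Set.preimage_univ]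

lemma finMutualInfo_eq_matrixMutualInfo [Fintype S] [MeasurableSpace S]
    [MeasurableSingletonClass S] [Fintype T] [MeasurableSpace T] [MeasurableSingletonClass T]
    (hs : Measurable s) (ht : Measurable t) :
    finMutualInfo μ s t = matrixMutualInfo (jointMass μ s t) := by
  have hpair : ∀ a b, (fun x => (s x, t x)) ⁻¹' {(a, b)} = s ⁻¹' {a} ∩ t ⁻¹' {b} := fun a b => by
    ext x
    simp [Prod.ext_iff]
  simp only [finMutualInfo, finEntropy, matrixMutualInfo, rowMass_jointMass μ ht,
    colMass_jointMass μ hs, Fintype.sum_prod_type, hpair]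
  rfl

end JointMass

end

theorem efficient_cov_from_mutual_info.{u, v, w} :
    ∀ α η : ℝ, 0 < α → α ≤ 1 → 0 < η → η < α →
    ∃ C : ℝ,
      ∀ (X : Type u) (S : Type v) (T : Type w)
        [MeasurableSpace X] [Fintype S] [MeasurableSpace S] [MeasurableSingletonClass S]
        [Fintype T] [MeasurableSpace T] [MeasurableSingletonClass T]
        (μ : Measure X), IsProbabilityMeasure μ →
      ∀ (s : X → S) (t : X → T), Measurable s → Measurable t →
      ∀ U : Set X, MeasurableSet U → ENNReal.ofReal α ≤ μ U →
        ∃ S₀ : Finset X, ↑S₀ ⊆ U ∧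
          Real.log S₀.card ≤ C * (finMutualInfo μ s t + 1) ∧
          (μ U).toReal - η <
            (μ (U ∩ {x | ∃ w ∈ U, t x = t w ∧ ∃ z ∈ S₀, s w = s z})).toReal := by
  intro α η _ _ hη _
  refine ⟨6 / η, fun X S T _ _ _ _ _ _ _ μ _ s t hs ht U hU _ => ?_⟩
  have : Nonempty S := (nonempty_of_isProbabilityMeasure μ).map s
  set q := jointMass (μ.restrict U) s t
  obtain ⟨V, hV_card, hV_cover⟩ := exists_card_le_sum_colMass_covered (q := q)
    (fun a b => measureReal_nonneg) (jointMass_restrict_le μ U)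
    (by rw [sum_jointMass μ hs ht, probReal_univ]) hη
  obtain ⟨S₀, hS₀U, hS₀_card, hS₀⟩ := Finset.exists_subset_card_le_forall_exists_eq U s V
  refine ⟨S₀, hS₀U, ?_, ?_⟩
  · rw [finMutualInfo_eq_matrixMutualInfo μ hs ht]
    exact (Real.log_natCast_le_log_natCast hS₀_card).trans hV_card
  set B := Finset.univ.filter fun b => ∃ a ∈ V, 0 < q a b
  have h_sub : t ⁻¹' B ∩ U ⊆ U ∩ {x | ∃ w ∈ U, t x = t w ∧ ∃ z ∈ S₀, s w = s z} := by
    rintro x ⟨hxB, hxU⟩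
    obtain ⟨a, ha, hpos⟩ := (Finset.mem_filter.1 hxB).2
    obtain ⟨w, hwU, rfl, hwt⟩ := exists_mem_of_jointMass_restrict_pos μ hU hpos
    obtain ⟨z, hz, hzs⟩ := hS₀ w hwU ha
    exact ⟨hxU, w, hwU, hwt.symm, z, hz, hzs.symm⟩
  calc (μ U).toReal - η = ∑ a, ∑ b, q a b - η := by
        rw [sum_jointMass _ hs ht, measureReal_restrict_apply_univ]; rfl
    _ < ∑ b ∈ B, colMass q b := hV_cover
    _ = μ.real (t ⁻¹' B ∩ U) := by
        rw [sum_colMass_jointMass _ hs ht, measureReal_restrict_apply (ht B.measurableSet)]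
    _ ≤ _ := measureReal_mono h_sub
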